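/- arXiv:1410.5357 — 3 statements merged into one kernel-verified Lean document; each statement's English description precedes it below -/
import Mathlib

section
/- Let κ ∈ ℝ with |κ| > 1/2 and let u be a function of the form u(θ) = θ^{|κ|}(π−θ)^{|κ|} q(θ) with q analytic in a neighbourhood of [0,π]. Then u belongs to the fractional Sobolev space H^r(0,π) for every r < |κ| + 1/2. -/
/-!
Extend `q` to a holomorphic `Q` on a neighbourhood of `[0, π]` in `ℂ`: locally by summing its
Taylor series at complex arguments, globally because two local extensions agree on the real axis,
hence on their convex common domain. Write `τ (n θ)` as a combination of `e^{± i n θ}`; the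
substitution `θ ↦ π - θ` preserves the weight `w θ = θ^α (π - θ)^α`, `α = |κ|`, so only
`∫₀^π e^{i n x} w(x) Q(x) dx` has to be estimated. By Cauchy's theorem it is the integral over the
other three sides of a rectangle `[0, π] × [0, T]` inside the domain of `Q`. The top side is
`O(e^{-n T})`; on the vertical sides `|w| ≲ y^α` and `|e^{i n z}| = e^{-n y}`, which gives
`Γ(α + 1) n^{-(α + 1)}`. Hence the coefficients are `O(n^{-(α + 1)})`, and
`Σ (1 + n²)^r n^{-2(α + 1)}` converges because `r < α + 1/2`.
-/

open MeasureTheory Real Set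
open Complex Metric Filter Topology Asymptotics

section

variable {F : Type*} [NormedAddCommGroup F] [NormedSpace ℂ F]

namespace FormalMultilinearSeries

noncomputable def complexify (p : FormalMultilinearSeries ℝ ℝ F) :
    FormalMultilinearSeries ℂ ℂ F :=
  fun n => ContinuousMultilinearMap.mkPiRing ℂ (Fin n) (p.coeff n)

variable (p : FormalMultilinearSeries ℝ ℝ F)

@[simp]
theorem norm_complexify (n : ℕ) : ‖p.complexify n‖ = ‖p n‖ := by
  rw [complexify, ContinuousMultilinearMap.norm_mkPiRing, norm_apply_eq_norm_coef]

@[simp]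
theorem radius_complexify : p.complexify.radius = p.radius := by
  simp only [radius, norm_complexify]

theorem complexify_apply_ofReal (n : ℕ) (y : ℝ) :
    (p.complexify n fun _ => (y : ℂ)) = p n fun _ => y := by
  simp [complexify, ← Complex.coe_smul]

end FormalMultilinearSeries

theorem AnalyticAt.exists_ball_complex_extension [CompleteSpace F] {q : ℝ → F} {x : ℝ}
    (hq : AnalyticAt ℝ q x) :
    ∃ ρ > 0, ∃ Q : ℂ → F, DifferentiableOn ℂ Q (ball (x : ℂ) ρ) ∧
      ∀ y : ℝ, (y : ℂ) ∈ ball (x : ℂ) ρ → Q y = q y := by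
  obtain ⟨p, r, hp⟩ := hq
  obtain ⟨ρ, hρ0, hρr⟩ := ENNReal.lt_iff_exists_nnreal_btwn.1 hp.r_pos
  have hρp : (ρ : ENNReal) < p.complexify.radius := by
    rw [p.radius_complexify]; exact hρr.trans_le hp.r_le
  have hsum := p.complexify.hasFPowerSeriesOnBall (hρ0.trans hρp)
  have hball : ∀ z ∈ ball (x : ℂ) ρ, z - x ∈ eball (0 : ℂ) p.complexify.radius := by
    intro z hz
    have : (‖z - x‖₊ : ENNReal) < ρ := by exact_mod_cast mem_ball_iff_norm.1 hz
    simpa [edist_zero_right, enorm_eq_nnnorm] using this.trans hρp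
  refine ⟨ρ, by exact_mod_cast hρ0, fun z => p.complexify.sum (z - x), ?_, ?_⟩
  · intro z hz
    exact ((hsum.differentiableOn _ (hball z hz)).differentiableAt
      (isOpen_eball.mem_nhds (hball z hz))).comp z
      (differentiableAt_id.sub_const _) |>.differentiableWithinAt
  · intro y hy
    have hy' : y - x ∈ eball (0 : ℝ) r := by
      have : (‖y - x‖₊ : ENNReal) < ρ := by
        rw [mem_ball_iff_norm, ← Complex.ofReal_sub, Complex.norm_real] at hy
        exact_mod_cast hy
      simpa [edist_zero_right, enorm_eq_nnnorm] using this.trans hρr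
    have hqy := (hp.hasSum hy').tsum_eq
    rw [add_sub_cancel] at hqy
    simp only [FormalMultilinearSeries.sum, ← Complex.ofReal_sub, p.complexify_apply_ofReal, hqy]

theorem AnalyticOnNhd.eqOn_of_preconnected_of_eqOn_ofReal {f g : ℂ → F} {U : Set ℂ}
    (hf : AnalyticOnNhd ℂ f U) (hg : AnalyticOnNhd ℂ g U) (hU : IsPreconnected U)
    (hUo : IsOpen U) {x₀ : ℝ} (hx₀ : (x₀ : ℂ) ∈ U) (hfg : ∀ x : ℝ, (x : ℂ) ∈ U → f x = g x) :
    EqOn f g U := by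
  refine hf.eqOn_of_preconnected_of_frequently_eq hg hU hx₀ ?_
  have hreal : ∀ᶠ x : ℝ in 𝓝[≠] x₀, f x = g x :=
    nhdsWithin_le_nhds <| Filter.mem_of_superset (continuous_ofReal.continuousAt.preimage_mem_nhds
      (hUo.mem_nhds hx₀)) fun x hx => hfg x hx
  exact (continuous_ofReal.continuousWithinAt.tendsto_nhdsWithin fun x hx =>
    ofReal_injective.ne hx).frequently hreal.frequently

theorem exists_differentiableOn_iUnion_of_eqOn_inter {𝕜 E G ι : Type*}
    [NontriviallyNormedField 𝕜] [NormedAddCommGroup E] [NormedSpace 𝕜 E]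
    [NormedAddCommGroup G] [NormedSpace 𝕜 G] {U : ι → Set E} (hU : ∀ i, IsOpen (U i))
    {f : ι → E → G} (hf : ∀ i, DifferentiableOn 𝕜 (f i) (U i))
    (hfU : ∀ i j, EqOn (f i) (f j) (U i ∩ U j)) :
    ∃ g : E → G, DifferentiableOn 𝕜 g (⋃ i, U i) ∧ ∀ i, EqOn g (f i) (U i) := by
  classical
  let g : E → G := fun z => if h : ∃ i, z ∈ U i then f h.choose z else 0
  have hg : ∀ i, EqOn g (f i) (U i) := fun i z hz => by
    have h : ∃ i, z ∈ U i := ⟨i, hz⟩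
    simp only [g, dif_pos h]
    exact hfU _ _ ⟨h.choose_spec, hz⟩
  refine ⟨g, fun z hz => ?_, hg⟩
  obtain ⟨i, hi⟩ := mem_iUnion.1 hz
  exact (((hf i).differentiableAt ((hU i).mem_nhds hi)).congr_of_eventuallyEq
    (eventually_of_mem ((hU i).mem_nhds hi) (hg i))).differentiableWithinAt

theorem Complex.ofReal_re_mem_ball {x ρ : ℝ} {z : ℂ} (hz : z ∈ ball (x : ℂ) ρ) :
    (z.re : ℂ) ∈ ball (x : ℂ) ρ := by
  rw [mem_ball_iff_norm, ← Complex.ofReal_sub, Complex.norm_real] at *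
  exact (abs_re_le_norm (z - x)).trans_lt (by simpa using hz)

theorem AnalyticOnNhd.exists_complex_extension [CompleteSpace F] {q : ℝ → F} {s : Set ℝ}
    (hq : AnalyticOnNhd ℝ q s) :
    ∃ V : Set ℂ, IsOpen V ∧ ofReal '' s ⊆ V ∧
      ∃ Q : ℂ → F, DifferentiableOn ℂ Q V ∧ ∀ x ∈ s, Q x = q x := by
  choose ρ hρ Q hQ hQq using fun x : s => (hq x x.2).exists_ball_complex_extension
  have hcenter : ∀ x : s, ((x : ℝ) : ℂ) ∈ ball ((x : ℝ) : ℂ) (ρ x) := fun x => mem_ball_self (hρ x)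
  have hagree : ∀ x y : s,
      EqOn (Q x) (Q y) (ball ((x : ℝ) : ℂ) (ρ x) ∩ ball ((y : ℝ) : ℂ) (ρ y)) := by
    rintro x y z hz
    have hconv := (convex_ball ((x : ℝ) : ℂ) (ρ x)).inter (convex_ball ((y : ℝ) : ℂ) (ρ y))
    refine AnalyticOnNhd.eqOn_of_preconnected_of_eqOn_ofReal
      (fun w hw => (hQ x).analyticOnNhd isOpen_ball w hw.1)
      (fun w hw => (hQ y).analyticOnNhd isOpen_ball w hw.2) hconv.isPreconnected
      (isOpen_ball.inter isOpen_ball) ⟨ofReal_re_mem_ball hz.1, ofReal_re_mem_ball hz.2⟩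
      (fun w hw => (hQq x w hw.1).trans (hQq y w hw.2).symm) hz
  obtain ⟨G, hG, hGQ⟩ :=
    exists_differentiableOn_iUnion_of_eqOn_inter (fun _ => isOpen_ball) hQ hagree
  refine ⟨_, isOpen_iUnion fun _ => isOpen_ball, ?_, G, hG, fun x hx => ?_⟩
  · rintro _ ⟨x, hx, rfl⟩
    exact mem_iUnion.2 ⟨⟨x, hx⟩, hcenter ⟨x, hx⟩⟩
  · exact (hGQ ⟨x, hx⟩ (hcenter ⟨x, hx⟩)).trans (hQq ⟨x, hx⟩ x (hcenter ⟨x, hx⟩))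

theorem exists_strip_subset_of_isOpen {V : Set ℂ} (hV : IsOpen V) {a b : ℝ}
    (h : ofReal '' Icc a b ⊆ V) : ∃ T > 0, ∀ z : ℂ, z.re ∈ Icc a b → |z.im| ≤ T → z ∈ V := by
  obtain ⟨δ, hδ, hδV⟩ := (isCompact_Icc.image continuous_ofReal).exists_thickening_subset_open hV h
  refine ⟨δ / 2, half_pos hδ, fun z hre him => hδV ?_⟩
  rw [mem_thickening_iff]
  refine ⟨z.re, mem_image_of_mem _ hre, ?_⟩
  have : z - z.re = z.im * I := by apply Complex.ext <;> simp
  rw [dist_eq_norm, this, norm_mul, norm_I, mul_one, norm_real, Real.norm_eq_abs]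
  exact him.trans_lt (half_lt_self hδ)

theorem integrableOn_rpow_mul_exp_neg_mul {α t : ℝ} (hα : -1 < α) (ht : 0 < t) :
    IntegrableOn (fun y : ℝ => y ^ α * Real.exp (-(t * y))) (Ioi 0) := by
  simpa [Real.rpow_one] using integrableOn_rpow_mul_exp_neg_mul_rpow hα one_pos ht

theorem integral_rpow_mul_exp_neg_mul_le {α t T : ℝ} (hα : -1 < α) (ht : 0 < t) (hT : 0 ≤ T) :
    ∫ y in 0..T, y ^ α * Real.exp (-(t * y)) ≤ Real.Gamma (α + 1) * t ^ (-(α + 1)) := by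
  have hGamma := Real.integral_rpow_mul_exp_neg_mul_Ioi (a := α + 1) (by linarith) ht
  rw [add_sub_cancel_right, one_div, Real.inv_rpow ht.le, ← Real.rpow_neg ht.le] at hGamma
  rw [intervalIntegral.integral_of_le hT, mul_comm, ← hGamma]
  refine setIntegral_mono_set (integrableOn_rpow_mul_exp_neg_mul hα ht) ?_
    (Eventually.of_forall Ioc_subset_Ioi_self)
  filter_upwards [ae_restrict_mem measurableSet_Ioi] with y hy
  exact mul_nonneg (Real.rpow_nonneg hy.le _) (Real.exp_nonneg _)

theorem norm_integral_le_of_norm_le_exp_neg_mul_rpow {G : Type*} [NormedAddCommGroup G]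
    [NormedSpace ℝ G] {g : ℝ → G} {T t K α : ℝ} (hT : 0 ≤ T) (ht : 0 < t) (hα : -1 < α)
    (hK : 0 ≤ K) (hg : ∀ y ∈ Ioc 0 T, ‖g y‖ ≤ K * (y ^ α * Real.exp (-(t * y)))) :
    ‖∫ y in 0..T, g y‖ ≤ K * (Real.Gamma (α + 1) * t ^ (-(α + 1))) := by
  have hint : IntervalIntegrable (fun y => y ^ α * Real.exp (-(t * y))) volume 0 T :=
    (intervalIntegrable_iff_integrableOn_Ioc_of_le hT).2
      ((integrableOn_rpow_mul_exp_neg_mul hα ht).mono_set Ioc_subset_Ioi_self)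
  calc ‖∫ y in 0..T, g y‖ ≤ ∫ y in 0..T, K * (y ^ α * Real.exp (-(t * y))) :=
        intervalIntegral.norm_integral_le_of_norm_le hT (ae_of_all _ hg) (hint.const_mul K)
    _ ≤ K * (Real.Gamma (α + 1) * t ^ (-(α + 1))) := by
        rw [intervalIntegral.integral_const_mul]
        exact mul_le_mul_of_nonneg_left (integral_rpow_mul_exp_neg_mul_le hα ht hT) hK

theorem Complex.norm_exp_ofReal_mul_mul_I (t : ℝ) (z : ℂ) :
    ‖cexp (t * z * I)‖ = Real.exp (-(t * z.im)) := by
  rw [norm_exp]; congr 1; simp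

theorem integral_eq_of_rect [CompleteSpace F] {g : ℂ → F} {L T : ℝ} (hL : 0 ≤ L) (hT : 0 ≤ T)
    (hc : ContinuousOn g (Icc 0 L ×ℂ Icc 0 T)) (hd : DifferentiableOn ℂ g (Ioo 0 L ×ℂ Ioo 0 T)) :
    ∫ x in 0..L, g x = (∫ x in 0..L, g (x + T * I)) - I • (∫ y in 0..T, g (L + y * I)) +
      I • ∫ y in 0..T, g (y * I) := by
  have hcauchy := integral_boundary_rect_eq_zero_of_continuousOn_of_differentiableOn g 0
    (L + T * I) (by simpa [uIcc_of_le hL, uIcc_of_le hT] using hc) (by simpa [hL, hT] using hd)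
  simp only [zero_re, zero_im, add_re, add_im, ofReal_re, ofReal_im, mul_re, mul_im, I_re, I_im,
    ofReal_zero, zero_mul, add_zero, zero_add, mul_zero, mul_one, sub_self] at hcauchy
  rw [← sub_eq_zero, ← hcauchy]
  abel

theorem norm_integral_exp_mul_le_of_rect [CompleteSpace F] {f : ℂ → F} {L T t M K α : ℝ}
    (hL : 0 ≤ L) (hT : 0 ≤ T) (ht : 0 < t) (hα : -1 < α) (hK : 0 ≤ K)
    (hc : ContinuousOn f (Icc 0 L ×ℂ Icc 0 T)) (hd : DifferentiableOn ℂ f (Ioo 0 L ×ℂ Ioo 0 T))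
    (htop : ∀ x ∈ Ioc 0 L, ‖f (x + T * I)‖ ≤ M)
    (hleft : ∀ y ∈ Ioc 0 T, ‖f (y * I)‖ ≤ K * y ^ α)
    (hright : ∀ y ∈ Ioc 0 T, ‖f (L + y * I)‖ ≤ K * y ^ α) :
    ‖∫ x in 0..L, cexp (t * x * I) • f x‖ ≤
      L * (Real.exp (-(t * T)) * M) + 2 * (K * (Real.Gamma (α + 1) * t ^ (-(α + 1)))) := by
  set g : ℂ → F := fun z => cexp (t * z * I) • f z with hg
  have hnorm : ∀ z, ‖g z‖ = Real.exp (-(t * z.im)) * ‖f z‖ := fun z => by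
    rw [hg, norm_smul, norm_exp_ofReal_mul_mul_I]
  have hexp : Differentiable ℂ fun z : ℂ => cexp (t * z * I) := by fun_prop
  have hgc : ContinuousOn g (Icc 0 L ×ℂ Icc 0 T) := hexp.continuous.continuousOn.smul hc
  have hgd : DifferentiableOn ℂ g (Ioo 0 L ×ℂ Ioo 0 T) := hexp.differentiableOn.smul hd
  have hside : ∀ p : ℝ → ℂ, (∀ y, (p y).im = y) → (∀ y ∈ Ioc 0 T, ‖f (p y)‖ ≤ K * y ^ α) →
      ‖∫ y in 0..T, g (p y)‖ ≤ K * (Real.Gamma (α + 1) * t ^ (-(α + 1))) :=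
    fun p hp hf => norm_integral_le_of_norm_le_exp_neg_mul_rpow hT ht hα hK fun y hy => by
      rw [hnorm, hp]
      calc _ ≤ Real.exp (-(t * y)) * (K * y ^ α) :=
            mul_le_mul_of_nonneg_left (hf y hy) (Real.exp_nonneg _)
        _ = _ := by ring
  have htop' : ‖∫ x in 0..L, g (x + T * I)‖ ≤ L * (Real.exp (-(t * T)) * M) := by
    have := intervalIntegral.norm_integral_le_of_norm_le_const (a := 0) (b := L)
      (f := fun x : ℝ => g (x + T * I)) (C := Real.exp (-(t * T)) * M) fun x hx => by
        rw [hnorm]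
        simpa using mul_le_mul_of_nonneg_left (htop x (by simpa [hL] using hx)) (Real.exp_nonneg _)
    rw [sub_zero, abs_of_nonneg hL] at this
    linarith
  calc ‖∫ x in 0..L, g x‖
      ≤ ‖∫ x in 0..L, g (x + T * I)‖ + ‖∫ y in 0..T, g (L + y * I)‖ +
          ‖∫ y in 0..T, g (y * I)‖ := by
        rw [integral_eq_of_rect hL hT hgc hgd]
        refine (norm_add_le _ _).trans (add_le_add ((norm_sub_le _ _).trans ?_) ?_) <;>
          simp [norm_smul]
    _ ≤ _ := by
        linarith [hside (fun y => L + y * I) (by simp) hright, hside (· * I) (by simp) hleft]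

noncomputable def endpointWeight (L α : ℝ) (z : ℂ) : ℂ := z ^ (α : ℂ) * ((L : ℂ) - z) ^ (α : ℂ)

theorem norm_endpointWeight (L α : ℝ) (z : ℂ) :
    ‖endpointWeight L α z‖ = ‖z‖ ^ α * ‖(L : ℂ) - z‖ ^ α := by
  rw [endpointWeight, norm_mul, norm_cpow_real, norm_cpow_real]

theorem endpointWeight_sub (L α : ℝ) (z : ℂ) :
    endpointWeight L α (L - z) = endpointWeight L α z := by
  rw [endpointWeight, endpointWeight, sub_sub_cancel, mul_comm]

theorem endpointWeight_ofReal {L α x : ℝ} (hx : x ∈ Icc 0 L) :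
    endpointWeight L α x = ((x ^ α * (L - x) ^ α : ℝ) : ℂ) := by
  rw [endpointWeight, ofReal_mul, ofReal_cpow hx.1, ofReal_cpow (sub_nonneg.2 hx.2), ofReal_sub]

theorem continuousAt_endpointWeight {L α : ℝ} (hα : 0 < α) {z : ℂ} (hz : z.re ∈ Icc 0 L) :
    ContinuousAt (endpointWeight L α) z := by
  have hα' : 0 < (α : ℂ).re := by simpa using hα
  refine (continuousAt_cpow_const_of_re_pos (Or.inl hz.1) hα').mul ?_
  exact (continuousAt_cpow_const_of_re_pos (Or.inl (by simpa using hz.2)) hα').comp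
    (continuousAt_const.sub continuousAt_id)

theorem differentiableAt_endpointWeight (L α : ℝ) {z : ℂ} (hz : z.im ≠ 0) :
    DifferentiableAt ℂ (endpointWeight L α) z := by
  have h₁ : z ∈ slitPlane := Or.inr hz
  have h₂ : (L : ℂ) - z ∈ slitPlane := Or.inr (by simpa using hz)
  exact (differentiableAt_id.cpow_const h₁).mul
    ((differentiableAt_const _).sub differentiableAt_id |>.cpow_const h₂)

theorem norm_le_of_mem_Icc_reProdIm_Icc {L T : ℝ} {z : ℂ} (hz : z ∈ Icc 0 L ×ℂ Icc 0 T) :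
    ‖z‖ ≤ L + T ∧ ‖(L : ℂ) - z‖ ≤ L + T := by
  obtain ⟨⟨h₁, h₂⟩, h₃, h₄⟩ := mem_reProdIm.1 hz
  refine ⟨(norm_le_abs_re_add_abs_im z).trans ?_, (norm_le_abs_re_add_abs_im _).trans ?_⟩
  · rw [abs_of_nonneg h₁, abs_of_nonneg h₃]; linarith
  · simp only [sub_re, sub_im, ofReal_re, ofReal_im, zero_sub, abs_neg]
    rw [abs_of_nonneg (by linarith), abs_of_nonneg h₃]; linarith

theorem exists_norm_integral_exp_mul_endpointWeight_smul_le [CompleteSpace F] {L T α : ℝ}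
    (hL : 0 ≤ L) (hT : 0 ≤ T) (hα : 0 < α) {Q : ℂ → F} {V : Set ℂ} (hV : IsOpen V)
    (hQ : DifferentiableOn ℂ Q V) (hR : Icc 0 L ×ℂ Icc 0 T ⊆ V) :
    ∃ C₁ C₂ : ℝ, ∀ t : ℝ, 0 < t →
      ‖∫ x in 0..L, cexp (t * x * I) • endpointWeight L α x • Q x‖ ≤
        C₁ * Real.exp (-(t * T)) + C₂ * t ^ (-(α + 1)) := by
  set R := Icc 0 L ×ℂ Icc 0 T
  obtain ⟨M, hM⟩ := (isCompact_Icc.reProdIm isCompact_Icc).exists_bound_of_continuousOn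
    (hQ.continuousOn.mono hR)
  have hM0 : 0 ≤ M := (norm_nonneg _).trans (hM 0 (mem_reProdIm.2 (by simp [hL, hT])))
  set A := L + T
  set f : ℂ → F := fun z => endpointWeight L α z • Q z
  have hf : ∀ z ∈ R, ‖f z‖ ≤ ‖z‖ ^ α * ‖(L : ℂ) - z‖ ^ α * M := fun z hz => by
    simp only [f, norm_smul, norm_endpointWeight]
    exact mul_le_mul_of_nonneg_left (hM z hz) (by positivity)
  have hfc : ContinuousOn f R := fun z hz =>
    ((continuousAt_endpointWeight hα (mem_reProdIm.1 hz).1).continuousWithinAt).smul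
      (hQ.continuousOn.mono hR z hz)
  have hfd : DifferentiableOn ℂ f (Ioo 0 L ×ℂ Ioo 0 T) := fun z hz =>
    ((differentiableAt_endpointWeight L α (mem_reProdIm.1 hz).2.1.ne').smul
      (hQ.differentiableAt (hV.mem_nhds (hR (reProdIm_subset_iff.2
        (prod_mono Ioo_subset_Icc_self Ioo_subset_Icc_self) hz))))).differentiableWithinAt
  have htop : ∀ x ∈ Ioc 0 L, ‖f (x + T * I)‖ ≤ A ^ α * A ^ α * M := fun x hx => by
    have hz : (x + T * I : ℂ) ∈ R := mem_reProdIm.2 (by simp [hx.1.le, hx.2, hT])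
    refine (hf _ hz).trans (mul_le_mul_of_nonneg_right ?_ hM0)
    gcongr
    exacts [(norm_le_of_mem_Icc_reProdIm_Icc hz).1, (norm_le_of_mem_Icc_reProdIm_Icc hz).2]
  have hleft : ∀ y ∈ Ioc 0 T, ‖f (y * I)‖ ≤ A ^ α * M * y ^ α := fun y hy => by
    have hz : (y * I : ℂ) ∈ R := mem_reProdIm.2 (by simp [hL, hy.1.le, hy.2])
    have hy' : ‖(y * I : ℂ)‖ = y := by simp [abs_of_pos hy.1]
    calc ‖f (y * I)‖ ≤ y ^ α * ‖(L : ℂ) - y * I‖ ^ α * M := by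
          simpa only [hy'] using hf _ hz
      _ ≤ y ^ α * A ^ α * M := by
          gcongr
          exacts [Real.rpow_nonneg hy.1.le _, (norm_le_of_mem_Icc_reProdIm_Icc hz).2]
      _ = A ^ α * M * y ^ α := by ring
  have hright : ∀ y ∈ Ioc 0 T, ‖f (L + y * I)‖ ≤ A ^ α * M * y ^ α := fun y hy => by
    have hz : (L + y * I : ℂ) ∈ R := mem_reProdIm.2 (by simp [hL, hy.1.le, hy.2])
    have hy' : ‖(L : ℂ) - (L + y * I)‖ = y := by simp [abs_of_pos hy.1]
    calc ‖f (L + y * I)‖ ≤ ‖(L + y * I : ℂ)‖ ^ α * y ^ α * M := by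
          simpa only [hy'] using hf _ hz
      _ ≤ A ^ α * y ^ α * M := by
          gcongr
          exacts [Real.rpow_nonneg hy.1.le _, (norm_le_of_mem_Icc_reProdIm_Icc hz).1]
      _ = A ^ α * M * y ^ α := by ring
  refine ⟨L * (A ^ α * A ^ α * M), 2 * (A ^ α * M * Real.Gamma (α + 1)), fun t ht => ?_⟩
  refine (norm_integral_exp_mul_le_of_rect hL hT ht (by linarith) (by positivity) hfc hfd htop
    hleft hright).trans (le_of_eq ?_)
  ring

theorem isBigO_integral_exp_mul_endpointWeight_smul [CompleteSpace F] {L T α : ℝ} (hL : 0 ≤ L)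
    (hT : 0 < T) (hα : 0 < α) {Q : ℂ → F} {V : Set ℂ} (hV : IsOpen V)
    (hQ : DifferentiableOn ℂ Q V) (hR : Icc 0 L ×ℂ Icc 0 T ⊆ V) :
    (fun t : ℝ => ∫ x in 0..L, cexp (t * x * I) • endpointWeight L α x • Q x) =O[atTop]
      fun t => t ^ (-(α + 1)) := by
  obtain ⟨C₁, C₂, hC⟩ :=
    exists_norm_integral_exp_mul_endpointWeight_smul_le hL hT.le hα hV hQ hR
  have hexp : (fun t : ℝ => Real.exp (-(t * T))) =O[atTop] fun t => t ^ (-(α + 1)) := by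
    simpa [mul_comm] using (isLittleO_exp_neg_mul_rpow_atTop hT (-(α + 1))).isBigO
  refine (IsBigO.of_bound' ?_).trans ((hexp.const_mul_left C₁).add
    ((isBigO_refl (fun t : ℝ => t ^ (-(α + 1))) atTop).const_mul_left C₂))
  filter_upwards [eventually_gt_atTop 0] with t ht
  exact (hC t ht).trans (le_abs_self _)

theorem isBigO_integral_exp_neg_mul_endpointWeight_smul [CompleteSpace F] {L T α : ℝ}
    (hL : 0 ≤ L) (hT : 0 < T) (hα : 0 < α) {Q : ℂ → F} {V : Set ℂ} (hV : IsOpen V)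
    (hQ : DifferentiableOn ℂ Q V) (hR : Icc 0 L ×ℂ Icc (-T) 0 ⊆ V) :
    (fun t : ℝ => ∫ x in 0..L, cexp (-(t * x * I)) • endpointWeight L α x • Q x) =O[atTop]
      fun t => t ^ (-(α + 1)) := by
  have hrefl : Differentiable ℂ fun z : ℂ => (L : ℂ) - z := by fun_prop
  have hB := isBigO_integral_exp_mul_endpointWeight_smul hL hT hα (hV.preimage hrefl.continuous)
    (hQ.comp hrefl.differentiableOn fun _ hz => hz) fun z hz => hR (by
      simp only [mem_reProdIm, sub_re, sub_im, ofReal_re, ofReal_im, mem_Icc] at hz ⊢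
      constructor <;> constructor <;> linarith)
  refine (IsBigO.of_bound' (Eventually.of_forall fun t => le_of_eq ?_)).trans hB
  -- `x ↦ L - x` fixes the weight and turns `e^{-itx}` into `e^{-itL} e^{itx}`.
  have h := intervalIntegral.integral_comp_sub_left (a := 0) (b := L)
    (fun x : ℝ => cexp (-(t * x * I)) • endpointWeight L α x • Q x) L
  rw [sub_self, sub_zero] at h
  have hint : ∀ x : ℝ,
      cexp (-(t * (L - x : ℝ) * I)) • endpointWeight L α (L - x : ℝ) • Q (L - x : ℝ) =
        cexp ((-(t * L) : ℝ) * I) • cexp (t * x * I) • endpointWeight L α x • Q (L - x) := by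
    intro x
    simp only [ofReal_sub, endpointWeight_sub, smul_smul, ← mul_assoc, ← Complex.exp_add]
    congr 3; push_cast; ring
  simp only [← h, hint, intervalIntegral.integral_smul, norm_smul, norm_exp_ofReal_mul_I, one_mul]
  rfl

theorem exists_ofReal_eq_mul_exp_add_mul_exp_neg {τ : ℝ → ℝ}
    (hτ : τ = Real.sin ∨ τ = Real.cos) :
    ∃ a b : ℂ, ∀ s : ℝ, (τ s : ℂ) = a * cexp (s * I) + b * cexp (-(s * I)) := by
  rcases hτ with rfl | rfl
  · refine ⟨-I / 2, I / 2, fun s => ?_⟩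
    rw [ofReal_sin, Complex.sin, neg_mul]
    ring
  · refine ⟨1 / 2, 1 / 2, fun s => ?_⟩
    rw [ofReal_cos, Complex.cos, neg_mul]
    ring

theorem isBigO_integral_trig_smul_endpointWeight_smul [CompleteSpace F] {τ : ℝ → ℝ}
    (hτ : τ = Real.sin ∨ τ = Real.cos) {L T α : ℝ} (hL : 0 ≤ L) (hT : 0 < T) (hα : 0 < α)
    {Q : ℂ → F} {V : Set ℂ} (hV : IsOpen V) (hQ : DifferentiableOn ℂ Q V)
    (hR : Icc 0 L ×ℂ Icc (-T) T ⊆ V) :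
    (fun t : ℝ => ∫ x in 0..L, τ (t * x) • endpointWeight L α x • Q x) =O[atTop]
      fun t => t ^ (-(α + 1)) := by
  obtain ⟨a, b, hab⟩ := exists_ofReal_eq_mul_exp_add_mul_exp_neg hτ
  have hup := isBigO_integral_exp_mul_endpointWeight_smul hL hT hα hV hQ <| subset_trans
    (reProdIm_subset_iff.2 <| prod_mono subset_rfl (Icc_subset_Icc (by linarith) le_rfl)) hR
  have hdown := isBigO_integral_exp_neg_mul_endpointWeight_smul hL hT hα hV hQ <| subset_trans
    (reProdIm_subset_iff.2 <| prod_mono subset_rfl (Icc_subset_Icc le_rfl hT.le)) hR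
  have hc : ContinuousOn (fun x : ℝ => endpointWeight L α x • Q x) (uIcc 0 L) := fun x hx => by
    rw [uIcc_of_le hL] at hx
    have hxV : (x : ℂ) ∈ V := hR (by simp [mem_reProdIm, hx.1, hx.2, hT.le])
    exact (((continuousAt_endpointWeight hα (by simpa using hx)).smul
      (hQ.continuousOn.continuousAt (hV.mem_nhds hxV))).comp
        continuous_ofReal.continuousAt).continuousWithinAt
  have hint : ∀ (c : ℂ) (e : ℝ → ℂ), Continuous e →
      IntervalIntegrable (fun x : ℝ => c • e x • endpointWeight L α x • Q x) volume 0 L :=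
    fun c e he => (he.continuousOn.smul hc).intervalIntegrable.smul c
  refine ((hup.const_smul_left a).add (hdown.const_smul_left b)).congr_left fun t => ?_
  rw [Pi.smul_apply, Pi.smul_apply, ← intervalIntegral.integral_smul,
    ← intervalIntegral.integral_smul,
    ← intervalIntegral.integral_add (hint a _ (by fun_prop)) (hint b _ (by fun_prop))]
  refine intervalIntegral.integral_congr fun x _ => ?_
  simp only [← Complex.coe_smul, hab, ofReal_mul, smul_smul, ← add_smul]
  congr 1
  ring

theorem isBigO_one_add_sq_rpow (r : ℝ) :
    (fun n : ℕ => (1 + (n : ℝ) ^ 2) ^ r) =O[atTop] fun n => (n : ℝ) ^ (2 * r) := by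
  have hθ : (fun n : ℕ => 1 + (n : ℝ) ^ 2) =Θ[atTop] fun n => (n : ℝ) ^ 2 := by
    refine ⟨IsBigO.of_bound 2 ?_, IsBigO.of_bound 1 ?_⟩ <;>
      filter_upwards [eventually_ge_atTop 1] with n hn
    · have : (1 : ℝ) ≤ (n : ℝ) ^ 2 := one_le_pow₀ (by exact_mod_cast hn)
      rw [Real.norm_of_nonneg (by positivity), Real.norm_of_nonneg (by positivity)]
      linarith
    · rw [Real.norm_of_nonneg (by positivity), Real.norm_of_nonneg (by positivity)]
      linarith
  refine (hθ.rpow (Eventually.of_forall fun n => by positivity)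
    (Eventually.of_forall fun n => by positivity)).isBigO.congr_right fun n => ?_
  rw [← Real.rpow_natCast, ← Real.rpow_mul (Nat.cast_nonneg n)]
  norm_num

theorem summable_one_add_sq_rpow_mul_norm_sq {E : Type*} [SeminormedAddCommGroup E]
    {a : ℕ → E} {β r : ℝ} (ha : a =O[atTop] fun n => (n : ℝ) ^ (-β)) (hr : r < β - 1 / 2) :
    Summable fun n : ℕ => (1 + (n : ℝ) ^ 2) ^ r * ‖a n‖ ^ 2 := by
  have hprod := (isBigO_one_add_sq_rpow r).mul (ha.norm_left.pow 2)
  refine summable_of_isBigO_nat' (Real.summable_nat_rpow.2 (by linarith : 2 * r - 2 * β < -1))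
    (hprod.congr' (Eventually.of_forall fun n => rfl) ?_)
  filter_upwards [eventually_gt_atTop 0] with n hn
  have hn' : (0 : ℝ) < n := by exact_mod_cast hn
  rw [← Real.rpow_natCast, ← Real.rpow_mul hn'.le, ← Real.rpow_add hn']
  congr 1
  push_cast
  ring

end

theorem eigenfunction_in_Hr_general (κ : ℝ) (hκ : 1/2 < |κ|)
    (q u : ℝ → EuclideanSpace ℂ (Fin 2)) (s : Set ℝ)
    (hIcc : Icc (0:ℝ) π ⊆ s) (hq : AnalyticOnNhd ℝ q s)
    (hu : ∀ θ ∈ Icc (0:ℝ) π, u θ = (θ ^ |κ| * (π - θ) ^ |κ|) • q θ)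
    (τ : ℝ → ℝ) (hτ : τ = if Even ⌊|κ|⌋ then Real.sin else Real.cos)
    (r : ℝ) (hr : r < |κ| + 1/2) :
    Summable (fun n : ℕ =>
      ((1:ℝ) + (n : ℝ) ^ 2) ^ r *
        ‖Real.sqrt (2/π) • ∫ θ in Ioo (0:ℝ) π, τ ((n : ℝ) * θ) • u θ‖ ^ 2) := by
  have hα : 0 < |κ| := by linarith
  have hτ' : τ = Real.sin ∨ τ = Real.cos := by split_ifs at hτ <;> simp [hτ]
  obtain ⟨V, hV, hsV, Q, hQ, hQq⟩ := hq.exists_complex_extension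
  obtain ⟨T, hT, hTV⟩ := exists_strip_subset_of_isOpen hV ((image_mono hIcc).trans hsV)
  have hcoeff : (fun t : ℝ => ∫ θ in Ioo 0 π, τ (t * θ) • u θ) =O[atTop]
      fun t => t ^ (-(|κ| + 1)) := by
    refine (isBigO_integral_trig_smul_endpointWeight_smul hτ' pi_pos.le hT hα hV hQ
      fun z hz => hTV z (mem_reProdIm.1 hz).1 (abs_le.2 (mem_reProdIm.1 hz).2)).congr_left
        fun t => ?_
    rw [intervalIntegral.integral_of_le pi_pos.le, integral_Ioc_eq_integral_Ioo]
    refine setIntegral_congr_fun measurableSet_Ioo fun θ hθ => ?_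
    have hθ' := Ioo_subset_Icc_self hθ
    rw [hu θ hθ', endpointWeight_ofReal hθ', Complex.coe_smul, hQq θ (hIcc hθ')]
  exact summable_one_add_sq_rpow_mul_norm_sq (β := |κ| + 1)
    ((hcoeff.comp_tendsto tendsto_natCast_atTop_atTop).const_smul_left (Real.sqrt (2 / π)))
    (by linarith)

/-- if `u(θ) = θ^{|κ|}(π-θ)^{|κ|} q(θ)` with `|κ| > 1/2` and `q` analytic in a
neighbourhood of `[0,π]`, then `u ∈ H^r(0,π)` for every `r < |κ| + 1/2`, where membership in
the fractional Sobolev space is expressed by summability of the weighted squares of the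
Fourier coefficients in the basis `τ(nθ)` (`τ = sin` or `cos` according to the parity of
`⌊|κ|⌋`). -/
theorem eigenfunction_in_Hr (κ : ℝ) (hκ : 1/2 < |κ|)
    (q u : ℝ → EuclideanSpace ℂ (Fin 2)) (s : Set ℝ) (hs : IsOpen s)
    (hIcc : Icc (0:ℝ) π ⊆ s) (hq : AnalyticOnNhd ℝ q s)
    (hu : ∀ θ ∈ Icc (0:ℝ) π, u θ = (θ ^ |κ| * (π - θ) ^ |κ|) • q θ)
    (τ : ℝ → ℝ) (hτ : τ = if Even ⌊|κ|⌋ then Real.sin else Real.cos)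
    (r : ℝ) (hr0 : 0 < r) (hr : r < |κ| + 1/2) :
    Summable (fun n : ℕ =>
      ((1:ℝ) + (n : ℝ) ^ 2) ^ r *
        ‖Real.sqrt (2/π) • ∫ θ in Ioo (0:ℝ) π, τ ((n : ℝ) * θ) • u θ‖ ^ 2) :=
  eigenfunction_in_Hr_general κ hκ q u s hIcc hq hu τ hτ r hr
end

section
/- Let A be self-adjoint and L a finite-dimensional subspace of dom(A). If z ∈ spec₂(A, L), then the closed real interval [Re(z) − |Im(z)|, Re(z) + |Im(z)|] intersects spec(A). -/
/-!
Write `z = a + b i`. Taking `v = u` in the defining relation, its real part says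
`‖(A - a) u‖ = |b| ‖u‖`. For a normal operator `T` the norm of `T⁻¹` is its spectral radius,
i.e. the reciprocal of the distance from `0` to `spec T`, so `‖T u‖ ≥ dist (0, spec T) ‖u‖`.
With `T = A - a` this puts a point of `spec A` within `|b|` of `a`.
-/

open Set

theorem re_inner_sub_smul_I_add_smul_I {E : Type*} [NormedAddCommGroup E]
    [InnerProductSpace ℂ E] (w u : E) (b : ℝ) :
    (inner ℂ (w - (b * Complex.I) • u) (w + (b * Complex.I) • u) : ℂ).re =
      ‖w‖ ^ 2 - b ^ 2 * ‖u‖ ^ 2 := by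
  have hwu : (inner ℂ u w).im = -(inner ℂ w u).im := by
    rw [← inner_conj_symm, Complex.conj_im]
  simp only [inner_sub_left, inner_add_right, inner_smul_left, inner_smul_right,
    inner_self_eq_norm_sq_to_K]
  simp [Complex.mul_re, hwu, ← Complex.ofReal_pow]
  ring

theorem re_inner_sub_smul_sub_conj_smul {E : Type*} [NormedAddCommGroup E]
    [InnerProductSpace ℂ E] (v u : E) (z : ℂ) :
    (inner ℂ (v - z • u) (v - (starRingEnd ℂ z) • u) : ℂ).re =
      ‖v - (z.re : ℂ) • u‖ ^ 2 - z.im ^ 2 * ‖u‖ ^ 2 := by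
  obtain ⟨a, b, rfl⟩ : ∃ a b : ℝ, z = a + b * Complex.I := ⟨_, _, (Complex.re_add_im z).symm⟩
  have hsub : v - (a + b * Complex.I) • u = (v - (a : ℂ) • u) - (b * Complex.I) • u := by
    rw [add_smul]; abel
  have hsub_conj :
      v - starRingEnd ℂ (a + b * Complex.I) • u = (v - (a : ℂ) • u) + (b * Complex.I) • u := by
    rw [map_add, map_mul, Complex.conj_ofReal, Complex.conj_ofReal, Complex.conj_I, add_smul,
      mul_neg, neg_smul]
    abel
  rw [hsub, hsub_conj, re_inner_sub_smul_I_add_smul_I]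
  simp

theorem IsStarNormal.sub_algebraMap {R A : Type*} [CommSemiring R] [StarRing R] [Ring A]
    [StarRing A] [Algebra R A] [StarModule R A] (a : A) [IsStarNormal a] (r : R) :
    IsStarNormal (a - algebraMap R A r) := by
  have hstar : star (algebraMap R A r) = algebraMap R A (star r) := (algebraMap_star_comm r).symm
  have : IsStarNormal (algebraMap R A r) := ⟨hstar ▸ Algebra.commutes _ _⟩
  exact (hstar ▸ (Algebra.commutes _ a).symm : Commute a _).isStarNormal_sub

theorem IsStarNormal.exists_mem_spectrum_norm_val_inv_eq_inv_norm {A : Type*} [CStarAlgebra A]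
    [Nontrivial A] (a : Aˣ) [IsStarNormal (a : A)] :
    ∃ μ ∈ spectrum ℂ (a : A), ‖(↑a⁻¹ : A)‖ = ‖μ‖⁻¹ := by
  obtain ⟨ν, hν, hνr⟩ := spectrum.exists_nnnorm_eq_spectralRadius (↑a⁻¹ : A)
  rw [IsStarNormal.spectralRadius_eq_nnnorm, ENNReal.coe_inj] at hνr
  refine ⟨ν⁻¹, spectrum.inv₀_mem hν, ?_⟩
  rw [norm_inv, inv_inv, ← coe_nnnorm, ← hνr, coe_nnnorm]

namespace ContinuousLinearMap

variable {H : Type*} [NormedAddCommGroup H] [InnerProductSpace ℂ H] [CompleteSpace H]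
  [Nontrivial H]

theorem exists_mem_spectrum_norm_mul_le_norm_apply (T : H →L[ℂ] H) [IsStarNormal T] (u : H) :
    ∃ μ ∈ spectrum ℂ T, ‖μ‖ * ‖u‖ ≤ ‖T u‖ := by
  by_cases hT : IsUnit T
  · obtain ⟨U, rfl⟩ := hT
    obtain ⟨μ, hμ, hnorm⟩ := IsStarNormal.exists_mem_spectrum_norm_val_inv_eq_inv_norm U
    have hμ0 : μ ≠ 0 := fun h => U.zero_notMem_spectrum ℂ (h ▸ hμ)
    have hu : ‖u‖ ≤ ‖μ‖⁻¹ * ‖(U : H →L[ℂ] H) u‖ := calc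
      ‖u‖ = ‖(↑U⁻¹ : H →L[ℂ] H) ((U : H →L[ℂ] H) u)‖ := by
        rw [← mul_apply_eq_comp, U.inv_mul, one_apply_eq_self]
      _ ≤ ‖μ‖⁻¹ * ‖(U : H →L[ℂ] H) u‖ := hnorm ▸ le_opNorm _ _
    refine ⟨μ, hμ, ?_⟩
    rwa [← le_div_iff₀' (norm_pos_iff.2 hμ0), div_eq_inv_mul]
  · exact ⟨0, spectrum.zero_mem ℂ hT, by simp⟩

theorem exists_mem_spectrum_norm_sub_mul_le (T : H →L[ℂ] H) [IsStarNormal T] (u : H) (r : ℂ) :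
    ∃ μ ∈ spectrum ℂ T, ‖μ - r‖ * ‖u‖ ≤ ‖T u - r • u‖ := by
  have := IsStarNormal.sub_algebraMap T r
  obtain ⟨μ, hμ, hle⟩ := exists_mem_spectrum_norm_mul_le_norm_apply (T - algebraMap ℂ _ r) u
  rw [← spectrum.sub_singleton_eq] at hμ
  obtain ⟨μ, hμ, r, rfl, rfl⟩ := hμ
  exact ⟨μ, hμ, by simpa [Algebra.algebraMap_eq_smul_one] using hle⟩

end ContinuousLinearMap

theorem second_order_spectrum_encloses_spectrum_general
    {H : Type*} [NormedAddCommGroup H] [InnerProductSpace ℂ H] [CompleteSpace H]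
    (A : H →L[ℂ] H) (hA : IsSelfAdjoint A)
    (L : Submodule ℂ H)
    (z : ℂ)
    (hz : ∃ u ∈ L, u ≠ 0 ∧ ∀ v ∈ L,
      (inner ℂ (A u - z • u) (A v - (starRingEnd ℂ z) • v) : ℂ) = 0) :
    ∃ x : ℝ, x ∈ Icc (z.re - |z.im|) (z.re + |z.im|) ∧ (x : ℂ) ∈ spectrum ℂ A := by
  obtain ⟨u, huL, hu0, horth⟩ := hz
  have : Nontrivial H := nontrivial_of_ne u 0 hu0
  have hnorm : ‖A u - (z.re : ℂ) • u‖ = |z.im| * ‖u‖ := by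
    have h := re_inner_sub_smul_sub_conj_smul (A u) u z
    rw [horth u huL, Complex.zero_re] at h
    refine (sq_eq_sq₀ (norm_nonneg _) (by positivity)).1 ?_
    rw [mul_pow, sq_abs]
    linarith
  have : IsStarNormal A := hA.isStarNormal
  obtain ⟨μ, hμ, hle⟩ := A.exists_mem_spectrum_norm_sub_mul_le u z.re
  rw [hA.mem_spectrum_eq_re hμ] at hle hμ
  have hdist : |μ.re - z.re| ≤ |z.im| := by
    rw [← Complex.ofReal_sub, Complex.norm_real, Real.norm_eq_abs] at hle
    exact le_of_mul_le_mul_right (hle.trans_eq hnorm) (norm_pos_iff.2 hu0)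
  refine ⟨μ.re, ?_, hμ⟩
  rw [mem_Icc]
  constructor <;> linarith [abs_sub_le_iff.1 hdist]

/-- if `A` is self-adjoint, `L` a finite-dimensional subspace, and
`z` lies in the second order spectrum of `A` relative to `L`, then the closed interval
`[Re z - |Im z|, Re z + |Im z|]` intersects the spectrum of `A`. -/
theorem second_order_spectrum_encloses_spectrum
    {H : Type*} [NormedAddCommGroup H] [InnerProductSpace ℂ H] [CompleteSpace H]
    (A : H →L[ℂ] H) (hA : IsSelfAdjoint A)
    (L : Submodule ℂ H) (hL : FiniteDimensional ℂ L)
    (z : ℂ)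
    (hz : ∃ u ∈ L, u ≠ 0 ∧ ∀ v ∈ L,
      (inner ℂ (A u - z • u) (A v - (starRingEnd ℂ z) • v) : ℂ) = 0) :
    ∃ x : ℝ, x ∈ Icc (z.re - |z.im|) (z.re + |z.im|) ∧ (x : ℂ) ∈ spectrum ℂ A :=
  second_order_spectrum_encloses_spectrum_general A hA L z hz
end

section
/- Let 1/2 < κ < 5/2 and b > 0, h = π/n with n ≥ 4, and suppose |u''(θ)| ≤ b θ^{κ−2} for θ ∈ (0, π/2]. Then for the piecewise linear interpolant u_h, Σ_{j=1}^{n/2−1} ∫_{θ_j}^{θ_{j+1}} (θ(π−θ))^{−2} |u(θ) − u_h(θ)|² dθ ≤ (b²/(8π²)) (1 + 1/(5−2κ)) h^{2κ−1}. -/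
open MeasureTheory Real Set

/-!
On an interval `[a, b]` the interpolation error at `θ` is a convex combination of the remainders
of the first-order Taylor expansions of `u` at `θ` evaluated at `a` and at `b`, which gives
`‖u - u_h‖ ≤ (b - a)² M / 8` with `M` a bound for `‖u''‖`. For `j ≥ 1` the interval
`[jh, (j + 1)h]` lies in `[jh, 2jh]`, so `κ - 2 < 1/2` gives `M ≤ √2 b (jh)^(κ-2)`, while the
weight `(θ(π - θ))⁻²` is at most `(jh π/2)⁻²`. The `j`-th term is therefore at most
`b²/(8π²) h^(2κ-1) j^(2κ-6)`, and as `2κ - 6 < -1` the sum of `j^(2κ-6)` is bounded by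
`1 + ∫₁^∞ t^(2κ-6) dt = 1 + 1/(5 - 2κ)`.
-/

theorem rpow_le_sqrt_two_mul_rpow {A θ p : ℝ} (hp : p ≤ 1 / 2) (hA : 0 < A) (hAθ : A ≤ θ)
    (hθA : θ ≤ 2 * A) : θ ^ p ≤ √2 * A ^ p := by
  have hratio : 1 ≤ θ / A := (one_le_div hA).2 hAθ
  calc θ ^ p = (θ / A) ^ p * A ^ p := by
        rw [div_rpow (hA.le.trans hAθ) hA.le, div_mul_cancel₀ _ (rpow_pos_of_pos hA p).ne']
    _ ≤ (θ / A) ^ (1 / 2 : ℝ) * A ^ p := by gcongr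
    _ ≤ √2 * A ^ p := by
        rw [sqrt_eq_rpow]; gcongr; exact (div_le_iff₀ hA).2 hθA

theorem sum_Icc_rpow_le {p : ℝ} (hp : p < -1) (N : ℕ) :
    ∑ j ∈ Finset.Icc 1 N, (j : ℝ) ^ p ≤ 1 + 1 / (-p - 1) := by
  have hp' : 0 < -p - 1 := by linarith
  rcases N with _ | m
  · simp only [Finset.Icc_eq_empty_of_lt one_pos, Finset.sum_empty]; positivity
  have hanti : AntitoneOn (fun x : ℝ => x ^ p) (Icc 1 (1 + m)) :=
    (antitoneOn_rpow_Ioi_of_exponent_nonpos (by linarith)).mono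
      fun x hx => lt_of_lt_of_le one_pos hx.1
  have hint : ∫ x in (1 : ℝ)..1 + m, x ^ p ≤ 1 / (-p - 1) := by
    rw [integral_rpow (Or.inr ⟨by linarith, by simp⟩), one_rpow]
    have hpow : 0 ≤ (1 + (m : ℝ)) ^ (p + 1) := by positivity
    calc ((1 + (m : ℝ)) ^ (p + 1) - 1) / (p + 1)
        = (1 - (1 + (m : ℝ)) ^ (p + 1)) / (-p - 1) := by
          rw [← neg_div_neg_eq, neg_sub, neg_add']
      _ ≤ 1 / (-p - 1) := by gcongr; linarith
  calc ∑ j ∈ Finset.Icc 1 (m + 1), (j : ℝ) ^ p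
      = 1 + ∑ i ∈ Finset.range m, (1 + ((i + 1 : ℕ) : ℝ)) ^ p := by
        rw [← Finset.Ico_add_one_right_eq_Icc, Finset.sum_Ico_eq_sum_range,
          Nat.add_sub_cancel, Finset.sum_range_succ', add_comm]
        push_cast; simp
    _ ≤ 1 + 1 / (-p - 1) := by
        gcongr
        exact hanti.sum_le_integral.trans hint

variable {E : Type*} [NormedAddCommGroup E]

theorem setIntegral_norm_sq_div_sq_le {g : ℝ → E} {A B C : ℝ} (hA : 0 < A) (hAB : A ≤ B)
    (hB : B ≤ π / 2) (hg : ∀ θ ∈ Ioo A B, ‖g θ‖ ≤ C) :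
    ∫ θ in Ioo A B, ‖g θ‖ ^ 2 / (θ * (π - θ)) ^ 2 ≤ C ^ 2 / (A * (π / 2)) ^ 2 * (B - A) := by
  have hpt : ∀ θ ∈ Ioo A B, ‖‖g θ‖ ^ 2 / (θ * (π - θ)) ^ 2‖ ≤ C ^ 2 / (A * (π / 2)) ^ 2 := by
    intro θ hθ
    have hweight : A * (π / 2) ≤ θ * (π - θ) :=
      mul_le_mul hθ.1.le (by linarith [hθ.2]) (by positivity) (hA.trans hθ.1).le
    rw [Real.norm_of_nonneg (by positivity)]
    exact div_le_div₀ (sq_nonneg C) (pow_le_pow_left₀ (norm_nonneg _) (hg θ hθ) 2)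
      (by positivity) (pow_le_pow_left₀ (by positivity) hweight 2)
  refine (le_abs_self _).trans ?_
  simpa [Real.volume_real_Ioo_of_le hAB] using
    norm_setIntegral_le_of_norm_le_const (μ := volume) measure_Ioo_lt_top hpt

variable [NormedSpace ℝ E]

theorem norm_first_order_taylor_remainder_le {f f' f'' : ℝ → E} {x y M : ℝ} (hxy : x ≤ y)
    (hf : ∀ z ∈ Icc x y, HasDerivAt f (f' z) z) (hf' : ∀ z ∈ Icc x y, HasDerivAt f' (f'' z) z)
    (hM : ∀ z ∈ Icc x y, ‖f'' z‖ ≤ M) :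
    ‖f y - f x - (y - x) • f' x‖ ≤ M * (y - x) ^ 2 / 2 := by
  have hf'_lip : ∀ z ∈ Icc x y, ‖f' z - f' x‖ ≤ M * (z - x) := fun z hz => by
    simpa [abs_of_nonneg (sub_nonneg.2 hz.1)] using
      (convex_Icc x y).norm_image_sub_le_of_norm_hasDerivWithin_le
        (fun w hw => (hf' w hw).hasDerivWithinAt) hM (left_mem_Icc.2 hxy) hz
  have hg : ∀ z ∈ Icc x y,
      HasDerivAt (fun z => f z - f x - (z - x) • f' x) (f' z - f' x) z := fun z hz =>
    (((hf z hz).sub_const (f x)).sub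
      (((hasDerivAt_id z).sub_const x).smul_const (f' x))).congr_deriv (by simp)
  have hB : ∀ z, HasDerivAt (fun z => M * (z - x) ^ 2 / 2) (M * (z - x)) z := fun z =>
    (((((hasDerivAt_id' z).sub_const x).fun_pow 2).const_mul M).div_const 2).congr_deriv
      (by norm_num; ring)
  refine image_norm_le_of_norm_deriv_right_le_deriv_boundary
    (fun z hz => (hg z hz).continuousAt.continuousWithinAt)
    (fun z hz => (hg z (Ico_subset_Icc_self hz)).hasDerivWithinAt) (by simp) hB
    (fun z hz => hf'_lip z (Ico_subset_Icc_self hz)) (right_mem_Icc.2 hxy)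

theorem norm_first_order_taylor_remainder_le_of_right {f f' f'' : ℝ → E} {x y M : ℝ}
    (hxy : x ≤ y) (hf : ∀ z ∈ Icc x y, HasDerivAt f (f' z) z)
    (hf' : ∀ z ∈ Icc x y, HasDerivAt f' (f'' z) z) (hM : ∀ z ∈ Icc x y, ‖f'' z‖ ≤ M) :
    ‖f x - f y - (x - y) • f' y‖ ≤ M * (y - x) ^ 2 / 2 := by
  have hmem : ∀ z ∈ Icc (-y) (-x), -z ∈ Icc x y := fun z hz =>
    ⟨by linarith [hz.2], by linarith [hz.1]⟩
  have := norm_first_order_taylor_remainder_le (f := fun z => f (-z)) (f' := fun z => -f' (-z))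
    (f'' := fun z => f'' (-z)) (neg_le_neg hxy)
    (fun z hz => ((hf _ (hmem z hz)).scomp z (hasDerivAt_neg z)).congr_deriv (neg_one_smul ℝ _))
    (fun z hz => ((hf' _ (hmem z hz)).scomp z (hasDerivAt_neg z)).neg.congr_deriv (by simp))
    (fun z hz => hM _ (hmem z hz))
  convert this using 2
  · simp only [neg_neg]; module
  · ring

theorem norm_sub_linear_interpolation_le {u u' u'' : ℝ → E} {a b M θ : ℝ} (hab : a < b)
    (hu : ∀ z ∈ Icc a b, HasDerivAt u (u' z) z) (hu' : ∀ z ∈ Icc a b, HasDerivAt u' (u'' z) z)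
    (hM : ∀ z ∈ Icc a b, ‖u'' z‖ ≤ M) (hθ : θ ∈ Icc a b) :
    ‖u θ - (u a + ((θ - a) / (b - a)) • (u b - u a))‖ ≤ M * (b - a) ^ 2 / 8 := by
  set t := (θ - a) / (b - a) with ht
  have hba : 0 < b - a := sub_pos.2 hab
  have hθa : θ - a = t * (b - a) := by rw [ht, div_mul_cancel₀ _ hba.ne']
  have ht0 : 0 ≤ t := div_nonneg (sub_nonneg.2 hθ.1) hba.le
  have ht1 : t ≤ 1 := (div_le_one hba).2 (by linarith [hθ.2])
  have hM0 : 0 ≤ M := (norm_nonneg _).trans (hM a (left_mem_Icc.2 hab.le))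
  have hleft := norm_first_order_taylor_remainder_le_of_right hθ.1
    (fun z hz => hu z ⟨hz.1, hz.2.trans hθ.2⟩) (fun z hz => hu' z ⟨hz.1, hz.2.trans hθ.2⟩)
    (fun z hz => hM z ⟨hz.1, hz.2.trans hθ.2⟩)
  have hright := norm_first_order_taylor_remainder_le hθ.2
    (fun z hz => hu z ⟨hθ.1.trans hz.1, hz.2⟩) (fun z hz => hu' z ⟨hθ.1.trans hz.1, hz.2⟩)
    (fun z hz => hM z ⟨hθ.1.trans hz.1, hz.2⟩)
  clear_value t
  -- the first-order terms cancel because `(1 - t) (a - θ) + t (b - θ) = 0`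
  have key : u θ - (u a + t • (u b - u a)) =
      -((1 - t) • (u a - u θ - (a - θ) • u' θ) + t • (u b - u θ - (b - θ) • u' θ)) := by
    linear_combination (norm := module) hθa • u' θ
  calc ‖u θ - (u a + t • (u b - u a))‖
      ≤ (1 - t) * (M * (θ - a) ^ 2 / 2) + t * (M * (b - θ) ^ 2 / 2) := by
        rw [key, norm_neg]
        refine (norm_add_le _ _).trans (add_le_add ?_ ?_) <;>
          rw [norm_smul, Real.norm_of_nonneg (by linarith)] <;> gcongr
    _ = M * (b - a) ^ 2 / 2 * (t * (1 - t)) := by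
        rw [show b - θ = (1 - t) * (b - a) by linarith, hθa]; ring
    _ ≤ M * (b - a) ^ 2 / 8 := by
        nlinarith [mul_nonneg (mul_nonneg hM0 (sq_nonneg (b - a))) (sq_nonneg (2 * t - 1))]

theorem setIntegral_interpolation_error_le {u u' u'' uh : ℝ → E} {κ b h A : ℝ}
    (hκ : κ < 5 / 2) (hb : 0 ≤ b) (hh : 0 < h) (hhA : h ≤ A) (hAπ : A + h ≤ π / 2)
    (hu : ∀ θ ∈ Icc A (A + h), HasDerivAt u (u' θ) θ)
    (hu' : ∀ θ ∈ Icc A (A + h), HasDerivAt u' (u'' θ) θ)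
    (hu'' : ∀ θ ∈ Icc A (A + h), ‖u'' θ‖ ≤ b * θ ^ (κ - 2))
    (huh : ∀ θ ∈ Icc A (A + h), uh θ = u A + ((θ - A) / h) • (u (A + h) - u A)) :
    ∫ θ in Ioo A (A + h), ‖u θ - uh θ‖ ^ 2 / (θ * (π - θ)) ^ 2
      ≤ b ^ 2 / (8 * π ^ 2) * h ^ 5 * A ^ (2 * κ - 6) := by
  have hA : 0 < A := hh.trans_le hhA
  have hM : ∀ θ ∈ Icc A (A + h), ‖u'' θ‖ ≤ √2 * b * A ^ (κ - 2) := fun θ hθ => by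
    refine (hu'' θ hθ).trans ?_
    rw [mul_comm √2 b, mul_assoc]
    gcongr
    exact rpow_le_sqrt_two_mul_rpow (by linarith) hA hθ.1 (by linarith [hθ.2])
  have herr : ∀ θ ∈ Ioo A (A + h), ‖u θ - uh θ‖ ≤ √2 * b * A ^ (κ - 2) * h ^ 2 / 8 :=
    fun θ hθ => by
      have := norm_sub_linear_interpolation_le (by linarith) hu hu' hM (Ioo_subset_Icc_self hθ)
      rwa [add_sub_cancel_left, ← huh θ (Ioo_subset_Icc_self hθ)] at this
  have hpow : (A ^ (κ - 2)) ^ 2 = A ^ (2 * κ - 6) * A ^ 2 := by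
    rw [← rpow_natCast, ← rpow_mul hA.le, ← rpow_natCast, ← rpow_add hA]
    norm_num; ring_nf
  calc _ ≤ (√2 * b * A ^ (κ - 2) * h ^ 2 / 8) ^ 2 / (A * (π / 2)) ^ 2 * (A + h - A) :=
        setIntegral_norm_sq_div_sq_le hA (by linarith) hAπ herr
    _ = b ^ 2 / (8 * π ^ 2) * h ^ 5 * A ^ (2 * κ - 6) := by
        rw [add_sub_cancel_left]
        simp only [div_pow, mul_pow, sq_sqrt zero_le_two, hpow]
        field_simp
        ring

theorem middle_intervals_estimate_general (κ b : ℝ) (hκ2 : κ < 5/2) (hb : 0 < b)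
    (n : ℕ) (h : ℝ) (hh : h = π / n)
    (u u' u'' uh : ℝ → EuclideanSpace ℂ (Fin 2))
    (hd1 : ∀ θ ∈ Ioo (0:ℝ) π, HasDerivAt u (u' θ) θ)
    (hd2 : ∀ θ ∈ Ioo (0:ℝ) π, HasDerivAt u' (u'' θ) θ)
    (hbound : ∀ θ ∈ Ioc (0:ℝ) (π/2), ‖u'' θ‖ ≤ b * θ ^ (κ - 2))
    (haffine : ∀ j : ℕ, j < n → ∀ θ ∈ Icc ((j:ℝ) * h) (((j:ℝ) + 1) * h),
      uh θ = u ((j:ℝ) * h) + ((θ - (j:ℝ) * h) / h) • (u (((j:ℝ) + 1) * h) - u ((j:ℝ) * h))) :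
    ∑ j ∈ Finset.Icc 1 (n / 2 - 1),
        ∫ θ in Ioo ((j:ℝ) * h) (((j:ℝ) + 1) * h), ‖u θ - uh θ‖ ^ 2 / (θ * (π - θ)) ^ 2
      ≤ (b ^ 2 / (8 * π ^ 2)) * (1 + 1 / (5 - 2 * κ)) * h ^ (2 * κ - 1) := by
  simp only [add_one_mul] at haffine ⊢
  have hh0 : 0 ≤ h := hh ▸ by positivity
  have hterm : ∀ j ∈ Finset.Icc 1 (n / 2 - 1),
      ∫ θ in Ioo ((j:ℝ) * h) ((j:ℝ) * h + h), ‖u θ - uh θ‖ ^ 2 / (θ * (π - θ)) ^ 2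
        ≤ b ^ 2 / (8 * π ^ 2) * h ^ (2 * κ - 1) * (j : ℝ) ^ (2 * κ - 6) := by
    intro j hj
    obtain ⟨hj1, hjn⟩ := Finset.mem_Icc.1 hj
    have hj : (1 : ℝ) ≤ j := by exact_mod_cast hj1
    have hjn : 2 * ((j : ℝ) + 1) ≤ n := by exact_mod_cast (by omega : 2 * (j + 1) ≤ n)
    have hh_pos : 0 < h := hh ▸ div_pos pi_pos (by linarith)
    have hjπ : (j : ℝ) * h + h ≤ π / 2 := by
      have : (n : ℝ) * h = π := by rw [hh]; field_simp [(by linarith : (0 : ℝ) < n).ne']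
      nlinarith
    have hsub : Icc ((j : ℝ) * h) (j * h + h) ⊆ Ioc 0 (π / 2) := fun θ hθ =>
      ⟨by nlinarith [hθ.1], hθ.2.trans hjπ⟩
    have hsub' : Icc ((j : ℝ) * h) (j * h + h) ⊆ Ioo 0 π :=
      hsub.trans (Ioc_subset_Ioo_right (by linarith [pi_pos]))
    calc _ ≤ b ^ 2 / (8 * π ^ 2) * h ^ 5 * ((j : ℝ) * h) ^ (2 * κ - 6) :=
          setIntegral_interpolation_error_le hκ2 hb.le hh_pos (by nlinarith) hjπ
            (fun θ hθ => hd1 θ (hsub' hθ)) (fun θ hθ => hd2 θ (hsub' hθ))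
            (fun θ hθ => hbound θ (hsub hθ)) (haffine j (by omega))
      _ = b ^ 2 / (8 * π ^ 2) * h ^ (2 * κ - 1) * (j : ℝ) ^ (2 * κ - 6) := by
          rw [mul_rpow (by positivity) hh_pos.le, show 2 * κ - 1 = 2 * κ - 6 + 5 by ring,
            rpow_add hh_pos, rpow_ofNat]
          ring
  have hsum := sum_Icc_rpow_le (p := 2 * κ - 6) (by linarith) (n / 2 - 1)
  rw [show -(2 * κ - 6) - 1 = 5 - 2 * κ by ring] at hsum
  calc _ ≤ ∑ j ∈ Finset.Icc 1 (n / 2 - 1),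
        b ^ 2 / (8 * π ^ 2) * h ^ (2 * κ - 1) * (j : ℝ) ^ (2 * κ - 6) := Finset.sum_le_sum hterm
    _ ≤ b ^ 2 / (8 * π ^ 2) * h ^ (2 * κ - 1) * (1 + 1 / (5 - 2 * κ)) := by
        rw [← Finset.mul_sum]
        exact mul_le_mul_of_nonneg_left hsum (mul_nonneg (by positivity) (rpow_nonneg hh0 _))
    _ = _ := by ring

/-- for `1/2 < κ < 5/2`, `b > 0`, `h = π/n` with `n ≥ 4`, a twice
differentiable `u` with `|u''(θ)| ≤ b θ^{κ-2}` on `(0, π/2]`, and `u_h` its piecewise linear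
interpolant, the middle-interval contribution satisfies
`Σ_{j=1}^{n/2-1} ∫_{θ_j}^{θ_{j+1}} (θ(π-θ))^{-2} |u - u_h|² dθ
  ≤ (b²/(8π²)) (1 + 1/(5-2κ)) h^{2κ-1}`. -/
theorem middle_intervals_estimate (κ b : ℝ) (hκ1 : 1/2 < κ) (hκ2 : κ < 5/2) (hb : 0 < b)
    (n : ℕ) (hn : 4 ≤ n) (h : ℝ) (hh : h = π / n)
    (u u' u'' uh : ℝ → EuclideanSpace ℂ (Fin 2))
    (hd1 : ∀ θ ∈ Ioo (0:ℝ) π, HasDerivAt u (u' θ) θ)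
    (hd2 : ∀ θ ∈ Ioo (0:ℝ) π, HasDerivAt u' (u'' θ) θ)
    (hbound : ∀ θ ∈ Ioc (0:ℝ) (π/2), ‖u'' θ‖ ≤ b * θ ^ (κ - 2))
    (hnodes : ∀ j : ℕ, j ≤ n → uh ((j : ℝ) * h) = u ((j : ℝ) * h))
    (haffine : ∀ j : ℕ, j < n → ∀ θ ∈ Icc ((j:ℝ) * h) (((j:ℝ) + 1) * h),
      uh θ = u ((j:ℝ) * h) + ((θ - (j:ℝ) * h) / h) • (u (((j:ℝ) + 1) * h) - u ((j:ℝ) * h))) :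
    ∑ j ∈ Finset.Icc 1 (n / 2 - 1),
        ∫ θ in Ioo ((j:ℝ) * h) (((j:ℝ) + 1) * h), ‖u θ - uh θ‖ ^ 2 / (θ * (π - θ)) ^ 2
      ≤ (b ^ 2 / (8 * π ^ 2)) * (1 + 1 / (5 - 2 * κ)) * h ^ (2 * κ - 1) :=
  middle_intervals_estimate_general κ b hκ2 hb n h hh u u' u'' uh hd1 hd2 hbound haffine
end
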